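/- arXiv:1512.04596 — 6 statements merged into one kernel-verified Lean document; each statement's English description precedes it below -/
import Mathlib

section
/- Let Ω = {ω₁, ω₂, ω₃} with the uniform probability P, and let θ be the cyclic bijection ω₁ ↦ ω₂ ↦ ω₃ ↦ ω₁. Define σ(ω₁) = 2.25, σ(ω₂) = 1.5, σ(ω₃) = 2, and τ(ω₁) = τ(ω₂) = τ(ω₃) = 1 (so that E[σ] = 5.75/3 < 2·E[τ]). Then there is no function V : Ω → ℝ² with 0 ≤ V(ω)(1) ≤ V(ω)(2) for all ω, satisfying V(θω) = G¹_ω(V(ω)) for all ω ∈ Ω, where G¹_ω(u) equals the nondecreasing rearrangement of ([u(1) + σ(ω) − 1]⁺, [u(2) − 1]⁺) if u(1) = 0, and the nondecreasing rearrangement of ([u(1) − 1]⁺, [u(2) + σ(ω) − 1]⁺) if u(1) > 0. -/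
open MeasureTheory ProbabilityTheory Filter

noncomputable section

/-- Positive part `[x]⁺ = max(x,0)`. -/
def pos (x : ℝ) : ℝ := max x 0

/-- Nondecreasing rearrangement of a finite real vector. -/
def sortVec {n : ℕ} (u : Fin n → ℝ) : Fin n → ℝ := u ∘ Tuple.sort u

/-- `u` belongs to `Ō_n`: nonnegative and nondecreasing coordinates. -/
def OSorted {n : ℕ} (u : Fin n → ℝ) : Prop := (∀ i, 0 ≤ u i) ∧ Monotone u

/-- Two-sided iterates `θ^n`, `n ∈ ℤ`, of a measurable bijection. -/
def iterZ {Ω : Type*} [MeasurableSpace Ω] (θ : Ω ≃ᵐ Ω) : ℤ → Ω → Ω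
  | Int.ofNat n => (⇑θ)^[n]
  | Int.negSucc n => (⇑θ.symm)^[n + 1]

/-- The term `σ∘θ^{-k} − Σ_{i=1}^k τ∘θ^{-i}` (here `θinv = θ⁻¹`). -/
def Zterm {Ω : Type*} (θinv : Ω → Ω) (σ τ : Ω → ℝ) (k : ℕ) (ω : Ω) : ℝ :=
  σ (θinv^[k] ω) - ∑ i ∈ Finset.Icc 1 k, τ (θinv^[i] ω)

/-- `Z_ℓ = [sup_{k ≥ ℓ} (σ∘θ^{-k} − Σ_{i=1}^k τ∘θ^{-i})]⁺`. -/
def Zfam {Ω : Type*} (θinv : Ω → Ω) (σ τ : Ω → ℝ) (ℓ : ℕ) (ω : Ω) : ℝ :=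
  pos (⨆ k : {k : ℕ // ℓ ≤ k}, Zterm θinv σ τ (k : ℕ) ω)

/-- GI/GI input: the doubly infinite sequences `(σ∘θ^n)` and `(τ∘θ^n)` are
jointly independent, and each is identically distributed. -/
def GIGI {Ω : Type*} [MeasurableSpace Ω] (μ : Measure Ω) (θ : Ω ≃ᵐ Ω) (σ τ : Ω → ℝ) : Prop :=
  iIndepFun
    (fun x : ℤ × Bool => fun ω => if x.2 then σ (iterZ θ x.1 ω) else τ (iterZ θ x.1 ω)) μ
  ∧ (∀ n : ℤ, IdentDistrib (fun ω => σ (iterZ θ n ω)) σ μ μ)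
  ∧ (∀ n : ℤ, IdentDistrib (fun ω => τ (iterZ θ n ω)) τ μ μ)

/-- The distribution of `τ` has unbounded support. -/
def UnboundedSupport {Ω : Type*} [MeasurableSpace Ω] (μ : Measure Ω) (τ : Ω → ℝ) : Prop :=
  ∀ M : ℝ, 0 < M → 0 < μ {ω | M < τ ω}

/-- The Kiefer–Wolfowitz map `G(u) = sorted [u + σe₁ − τ𝟙]⁺`. -/
def Gmap (S : ℕ) (σ τ : ℝ) (u : Fin S → ℝ) : Fin S → ℝ :=
  sortVec fun i => pos (u i + (if (i : ℕ) = 0 then σ else 0) - τ)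

/-- The map `G^p` driving the J_{p+1}SW service profile. -/
def Gp (S p : ℕ) (hS : 0 < S) (σ τ : ℝ) (u : Fin S → ℝ) : Fin S → ℝ :=
  if u ⟨0, hS⟩ = 0 then Gmap S σ τ u
  else sortVec fun i => pos (u i + (if (i : ℕ) = p then σ else 0) - τ)

/-- The map `Γ^p`. -/
def Gamma (p : ℕ) (σ τ : ℝ) (u : Fin p → ℝ) : Fin p → ℝ := fun j =>
  if h : (j : ℕ) + 1 < p then pos (u ⟨(j : ℕ) + 1, h⟩ - τ) else pos (max (u j) σ - τ)

/-- The map `Ψ^p`. -/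
def Psi (p : ℕ) (σ τ : ℝ) (u : Fin p → ℝ) : Fin p → ℝ := fun j =>
  if h : (j : ℕ) + 1 < p then pos (min (max (u j) σ) (u ⟨(j : ℕ) + 1, h⟩) - τ)
  else pos (max (u j) σ - τ)

/-- The map `Φ^p` on `Ō_S` (with `1 ≤ p < S`). -/
def Phi (S p : ℕ) (hp : p < S) (σ τ : ℝ) (u : Fin S → ℝ) : Fin S → ℝ := fun j =>
  let ind : ℝ := if 0 < u ⟨0, Nat.lt_of_le_of_lt (Nat.zero_le p) hp⟩ then u ⟨p, hp⟩ else 0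
  if h : (j : ℕ) + 1 < S then
    if (j : ℕ) < p then pos (min (max (u j) σ) (u ⟨(j : ℕ) + 1, h⟩) - τ)
    else pos (min (max (u j) (σ + ind)) (u ⟨(j : ℕ) + 1, h⟩) - τ)
  else pos (max (u j) (σ + ind) - τ)

/-- The loss-system map `H^p(u) = sorted [u + σ·1_{u(1)=0}e₁ − τ𝟙]⁺`. -/
def Hmap (p : ℕ) (hp : 0 < p) (σ τ : ℝ) (u : Fin p → ℝ) : Fin p → ℝ :=
  sortVec fun i => pos (u i + (if (i : ℕ) = 0 ∧ u ⟨0, hp⟩ = 0 then σ else 0) - τ)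

end

/-!
For `0 ≤ τ ≤ σ` the map `G¹` is piecewise affine on sorted nonnegative states, with five
pieces, so a solution `V` (a periodic orbit of period 3) solves one of `5³` linear systems,
and each of them is infeasible. Behind this is a workload balance: over a period the workload
returns to its value, so the servers can idle for a total time of only `6 - 5.75 = 0.25`,
whereas the short job `σ(ω₂) = 1.5` sent to an idle server already forces an idle time `0.5`
at the next step, and the remaining configurations fail similarly.
-/

theorem sortVec_pair (x y : ℝ) : sortVec ![x, y] = ![min x y, max x y] := by
  have hmono {a b : ℝ} (h : a ≤ b) : Monotone ![a, b] := by
    intro i j hij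
    fin_cases i <;> fin_cases j <;> simp_all
  rcases le_total x y with h | h
  · have key := (Tuple.comp_sort_eq_comp_iff_monotone (σ := Equiv.refl _)).2 (hmono h)
    simpa [sortVec, h] using key.symm
  · have hswap : ![x, y] ∘ Equiv.swap 0 1 = ![y, x] := by
      funext i; fin_cases i <;> simp
    have key := (Tuple.comp_sort_eq_comp_iff_monotone (σ := Equiv.swap 0 1)).2
      (hswap ▸ hmono h)
    rw [hswap] at key
    simpa [sortVec, h] using key.symm

theorem Gp_two_one (σ τ : ℝ) (u : Fin 2 → ℝ) :
    Gp 2 1 two_pos σ τ u =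
      if u 0 = 0 then sortVec ![pos (u 0 + σ - τ), pos (u 1 - τ)]
      else sortVec ![pos (u 0 - τ), pos (u 1 + σ - τ)] := by
  have hvec {a b : ℝ} (f : Fin 2 → ℝ) (h0 : f 0 = a) (h1 : f 1 = b) : f = ![a, b] := by
    funext i; fin_cases i <;> simpa
  unfold Gp Gmap
  rw [show (⟨0, two_pos⟩ : Fin 2) = 0 from rfl]
  split_ifs <;> congr 1 <;> apply hvec <;> simp

theorem Gp_two_one_cases {σ τ : ℝ} (hτ : 0 ≤ τ) (hτσ : τ ≤ σ) {u : Fin 2 → ℝ}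
    (hu₀ : 0 ≤ u 0) (hu : u 0 ≤ u 1) (v : Fin 2 → ℝ) (hv : v = Gp 2 1 two_pos σ τ u) :
    (u 0 = 0 ∧ u 1 ≤ τ ∧ v 0 = 0 ∧ v 1 = σ - τ) ∨
    (u 0 = 0 ∧ τ ≤ u 1 ∧ u 1 ≤ σ ∧ v 0 = u 1 - τ ∧ v 1 = σ - τ) ∨
    (u 0 = 0 ∧ σ ≤ u 1 ∧ v 0 = σ - τ ∧ v 1 = u 1 - τ) ∨
    (0 < u 0 ∧ u 0 ≤ τ ∧ v 0 = 0 ∧ v 1 = u 1 + σ - τ) ∨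
    (τ ≤ u 0 ∧ v 0 = u 0 - τ ∧ v 1 = u 1 + σ - τ) := by
  subst hv
  rw [Gp_two_one]
  split_ifs with h0
  · simp only [sortVec_pair, h0, zero_add, pos, max_eq_left (sub_nonneg.2 hτσ),
      Matrix.cons_val_zero, Matrix.cons_val_one]
    rcases le_total (u 1) τ with h1 | h1
    · left
      simp [h1, hτσ]
    rcases le_total (u 1) σ with h2 | h2 <;> simp [h1, h2]
  · have hpos : 0 < u 0 := lt_of_le_of_ne hu₀ (Ne.symm h0)
    have hlt : pos (u 0 - τ) ≤ pos (u 1 + σ - τ) := max_le_max (by linarith) le_rfl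
    simp only [sortVec_pair, min_eq_left hlt, max_eq_right hlt,
      Matrix.cons_val_zero, Matrix.cons_val_one]
    have h1 : pos (u 1 + σ - τ) = u 1 + σ - τ := max_eq_left (by linarith)
    rcases le_total (u 0) τ with h2 | h2
    · have : pos (u 0 - τ) = 0 := max_eq_right (by linarith)
      simp [this, h1, hpos, h2]
    · have : pos (u 0 - τ) = u 0 - τ := max_eq_left (by linarith)
      simp [this, h1, h2]

theorem stmt2 :
    ¬ ∃ V : Fin 3 → Fin 2 → ℝ,
      (∀ ω : Fin 3, 0 ≤ V ω 0 ∧ V ω 0 ≤ V ω 1) ∧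
      (∀ ω : Fin 3, V (ω + 1) =
        (if V ω 0 = 0 then
          sortVec ![pos (V ω 0 + (![2.25, 1.5, 2] : Fin 3 → ℝ) ω - 1), pos (V ω 1 - 1)]
        else
          sortVec ![pos (V ω 0 - 1), pos (V ω 1 + (![2.25, 1.5, 2] : Fin 3 → ℝ) ω - 1)])) := by
  rintro ⟨V, hsorted, horbit⟩
  have step (ω : Fin 3) (hσ : 1 ≤ (![2.25, 1.5, 2] : Fin 3 → ℝ) ω) :=
    Gp_two_one_cases zero_le_one hσ (hsorted ω).1 (hsorted ω).2 _
      ((horbit ω).trans (Gp_two_one _ _ _).symm)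
  have s0 := step 0 (by norm_num)
  have s1 := step 1 (by norm_num)
  have s2 := step 2 (by simp)
  simp only [show (0 : Fin 3) + 1 = 1 from rfl, show (1 : Fin 3) + 1 = 2 from rfl,
    show (2 : Fin 3) + 1 = 0 from rfl, Matrix.cons_val_zero, Matrix.cons_val_one,
    Matrix.cons_val_two, Matrix.head_cons, Matrix.tail_cons] at s0 s1 s2
  obtain ⟨-, h0⟩ := hsorted 0
  obtain ⟨-, h1⟩ := hsorted 1
  obtain ⟨-, h2⟩ := hsorted 2
  rcases s0 with s0 | s0 | s0 | s0 | s0 <;> rcases s1 with s1 | s1 | s1 | s1 | s1 <;>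
    rcases s2 with s2 | s2 | s2 | s2 | s2 <;> norm_num at s0 s1 s2 <;> linarith
end

section
/- Let (Ω, F, P, θ) be a stationary ergodic quadruple carrying σ, τ as in the context, let S ≥ 1 and 0 ≤ p ≤ S−1. If there exists a measurable Ō_S-valued random vector W, with each coordinate W(i) integrable, satisfying W∘θ = G^p(W) P-almost surely, then E[σ] ≤ S·E[τ]. -/
open MeasureTheory ProbabilityTheory Filter

/-! Each step of `G^p` sorts a vector whose coordinates dominate `u + σ e_k − τ𝟙`, so the total
workload `∑ i, W i` grows by at least `σ − S τ` per step. By stationarity the expected growth is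
zero, whence `E σ − S E τ ≤ 0`. -/

open Finset

theorem sum_sortVec {n : ℕ} (u : Fin n → ℝ) : ∑ i, sortVec u i = ∑ i, u i :=
  Equiv.sum_comp (Tuple.sort u) u

theorem sum_add_sub_le_sum_pos {n k : ℕ} (hk : k < n) (u : Fin n → ℝ) (s t : ℝ) :
    ∑ i, u i + (s - n * t) ≤ ∑ i : Fin n, pos (u i + (if (i : ℕ) = k then s else 0) - t) := by
  have hs : ∑ i : Fin n, (if (i : ℕ) = k then s else 0) = s := by
    simp_rw [← Fin.ext_iff (b := ⟨k, hk⟩)]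
    simp
  calc ∑ i, u i + (s - n * t)
      = ∑ i : Fin n, (u i + (if (i : ℕ) = k then s else 0) - t) := by
        rw [sum_sub_distrib, sum_add_distrib, hs, sum_const, card_univ, Fintype.card_fin,
          nsmul_eq_mul]
        ring
    _ ≤ _ := sum_le_sum fun i _ => le_max_left _ _

theorem sum_add_sub_le_sum_Gp {S p : ℕ} (hS : 0 < S) (hp : p < S) (σ τ : ℝ) (u : Fin S → ℝ) :
    ∑ i, u i + (σ - S * τ) ≤ ∑ i, Gp S p hS σ τ u i := by
  unfold Gp Gmap
  split_ifs <;> rw [sum_sortVec]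
  exacts [sum_add_sub_le_sum_pos hS u σ τ, sum_add_sub_le_sum_pos hp u σ τ]

theorem MeasureTheory.MeasurePreserving.integral_nonpos_of_add_le_comp {α : Type*}
    [MeasurableSpace α] {μ : Measure α} {T : α → α} (hT : MeasurePreserving T μ μ)
    {f g : α → ℝ} (hf : Integrable f μ) (hg : Integrable g μ)
    (hle : ∀ᵐ x ∂μ, f x + g x ≤ f (T x)) : ∫ x, g x ∂μ ≤ 0 := by
  have hfm : AEStronglyMeasurable f (μ.map T) := by
    rw [hT.map_eq]; exact hf.aestronglyMeasurable
  have hfT : ∫ x, f (T x) ∂μ = ∫ x, f x ∂μ := by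
    rw [← integral_map hT.measurable.aemeasurable hfm, hT.map_eq]
  have hmono := integral_mono_ae (f := fun x => f x + g x) (g := fun x => f (T x)) (hf.add hg)
    (hT.integrable_comp_of_integrable hf) hle
  rw [integral_add hf hg, hfT] at hmono
  linarith

theorem stmt3 {Ω : Type*} [MeasurableSpace Ω] (μ : MeasureTheory.Measure Ω)
    (θ : Ω ≃ᵐ Ω) (hergo : Ergodic (⇑θ) μ)
    (σ τ : Ω → ℝ) (hσint : MeasureTheory.Integrable σ μ) (hτint : MeasureTheory.Integrable τ μ)
    (S p : ℕ) (hS : 1 ≤ S) (hpS : p ≤ S - 1)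
    (W : Ω → Fin S → ℝ)
    (hWint : ∀ i : Fin S, MeasureTheory.Integrable (fun ω => W ω i) μ)
    (hWr : ∀ᵐ ω ∂μ, W (θ ω) = Gp S p (by omega) (σ ω) (τ ω) (W ω)) :
    ∫ ω, σ ω ∂μ ≤ (S : ℝ) * ∫ ω, τ ω ∂μ := by
  have hincr : ∀ᵐ ω ∂μ, ∑ i, W ω i + (σ ω - S * τ ω) ≤ ∑ i, W (θ ω) i := by
    filter_upwards [hWr] with ω hω
    rw [hω]
    exact sum_add_sub_le_sum_Gp _ (by omega) _ _ _
  have hτS := hτint.const_mul (S : ℝ)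
  have hmean := hergo.toMeasurePreserving.integral_nonpos_of_add_le_comp
    (g := fun ω => σ ω - S * τ ω) (integrable_finsetSum _ fun i _ => hWint i)
    (hσint.sub hτS) hincr
  rw [integral_sub hσint hτS, integral_const_mul] at hmean
  linarith
end

section
/- Let (Ω, F, P, θ) be a stationary ergodic quadruple carrying σ, τ as in the context and let p ≥ 1. Then the random vector Z^p := (Z_p, Z_{p−1}, …, Z_1) is almost surely finite, takes values in Ō_p, and satisfies Z^p∘θ = Γ^p(Z^p) P-a.s.; moreover it is the unique such solution: any measurable, almost surely finite Ō_p-valued random vector Z with Z∘θ = Γ^p(Z) a.s. satisfies Z = Z^p a.s. -/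
open MeasureTheory ProbabilityTheory Filter

/-! Write `T = θ⁻¹`, so that `Zterm k = σ∘T^k - S_k` with `S_k = Σ_{i=1}^k τ∘T^i`. By Hopf's maximal
ergodic theorem, the Birkhoff sums of an integrable observable with negative mean are a.s. bounded
above. Since `E τ > 0`, applying this to `(σ - a)⁺ - τ` for a large truncation level `a` shows that
`k ↦ Zterm k` is a.s. bounded above, so all `Z_ℓ` are finite, and applying it to `c - τ` with
`0 < c < E τ` shows that `S_k → ∞` a.s.

The recursion `Z^p∘θ = Γ^p(Z^p)` is the shift identity `Z_{ℓ+1}∘θ = [Z_ℓ - τ]⁺` together with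
`Z_1∘θ = [max(Z_1, σ) - τ]⁺`. For uniqueness, let `Z` be another solution. Unrolling its recursion
along the backward orbit gives `Z ≥ Z^p`. Its last coordinate `W` satisfies
`W ≤ max(W∘T^N - S_N, Z_1)` for every `N`. By Poincaré recurrence `W∘T^N` returns infinitely often
below a fixed level while `S_N → ∞`, hence `W ≤ Z_1`, and the monotonicity of `Γ^p` carries this
bound down to the other coordinates. -/

open Set Topology

lemma pos_nonneg (x : ℝ) : 0 ≤ pos x := le_max_right x 0

lemma le_pos (x : ℝ) : x ≤ pos x := le_max_left x 0

lemma pos_le_pos {x y : ℝ} (h : x ≤ y) : pos x ≤ pos y := max_le_max_right 0 h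

lemma pos_pos_sub {t : ℝ} (ht : 0 ≤ t) (x : ℝ) : pos (pos x - t) = pos (x - t) := by
  rcases le_total x 0 with hx | hx
  · simp only [pos, max_eq_right hx]
    rw [max_eq_right (by linarith), max_eq_right (by linarith)]
  · simp only [pos, max_eq_left hx]

section BirkhoffMax

variable {α : Type*} {f : α → α} {g : α → ℝ}

def birkhoffMax (f : α → α) (g : α → ℝ) (n : ℕ) : α → ℝ := partialSups (birkhoffSum f g) n

lemma birkhoffSum_le_birkhoffMax {k n : ℕ} (h : k ≤ n) (x : α) :
    birkhoffSum f g k x ≤ birkhoffMax f g n x :=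
  le_partialSups_of_le (birkhoffSum f g) h x

lemma birkhoffMax_nonneg (n : ℕ) (x : α) : 0 ≤ birkhoffMax f g n x := by
  simpa using birkhoffSum_le_birkhoffMax (f := f) (g := g) (Nat.zero_le n) x

lemma birkhoffMax_le_max_zero_add (n : ℕ) (x : α) :
    birkhoffMax f g n x ≤ max 0 (g x + birkhoffMax f g n (f x)) := by
  rw [birkhoffMax, Pi.partialSups_apply]
  refine partialSups_le _ _ _ fun j hj => ?_
  cases j with
  | zero => simp
  | succ j =>
    rw [birkhoffSum_succ']
    exact le_max_of_le_right (by gcongr; exact birkhoffSum_le_birkhoffMax (by omega) _)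

lemma birkhoffMax_succ (n : ℕ) :
    birkhoffMax f g (n + 1) = birkhoffMax f g n ⊔ birkhoffSum f g (n + 1) :=
  partialSups_succ _ n

lemma birkhoffMax_mono {m n : ℕ} (h : m ≤ n) : birkhoffMax f g m ≤ birkhoffMax f g n :=
  (partialSups (birkhoffSum f g)).monotone h

lemma birkhoffSum_const (c : ℝ) (n : ℕ) (x : α) : birkhoffSum f (fun _ => c) n x = n * c := by
  simp [birkhoffSum]

lemma bddAbove_birkhoffSum_apply {x : α} (h : BddAbove (range fun n => birkhoffSum f g n x)) :
    BddAbove (range fun n => birkhoffSum f g n (f x)) := by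
  obtain ⟨c, hc⟩ := h
  refine ⟨c - g x, forall_mem_range.2 fun n => ?_⟩
  have := hc (mem_range_self (n + 1))
  rw [birkhoffSum_succ'] at this
  linarith

end BirkhoffMax

section Ergodic

variable {α : Type*} [MeasurableSpace α] {μ : Measure α} {f : α → α} {g : α → ℝ}

lemma integrable_birkhoffSum (hf : MeasurePreserving f μ μ) (hg : Integrable g μ) (n : ℕ) :
    Integrable (birkhoffSum f g n) μ :=
  integrable_finsetSum _ fun k _ => (hf.iterate k).integrable_comp_of_integrable hg

lemma integrable_birkhoffMax (hf : MeasurePreserving f μ μ) (hg : Integrable g μ) (n : ℕ) :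
    Integrable (birkhoffMax f g n) μ := by
  induction n with
  | zero => rw [birkhoffMax, partialSups_zero]; exact integrable_birkhoffSum hf hg 0
  | succ n ih => rw [birkhoffMax_succ]; exact ih.sup (integrable_birkhoffSum hf hg _)

lemma measurable_birkhoffSum (hf : Measurable f) (hg : Measurable g) (n : ℕ) :
    Measurable (birkhoffSum f g n) :=
  Finset.measurable_sum _ fun k _ => hg.comp (hf.iterate k)

lemma measurable_birkhoffMax (hf : Measurable f) (hg : Measurable g) (n : ℕ) :
    Measurable (birkhoffMax f g n) := by
  induction n with
  | zero => rw [birkhoffMax, partialSups_zero]; exact measurable_birkhoffSum hf hg 0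
  | succ n ih => rw [birkhoffMax_succ]; exact ih.sup (measurable_birkhoffSum hf hg _)

/-- Hopf's maximal ergodic theorem. -/
theorem setIntegral_birkhoffMax_pos_nonneg (hf : MeasurePreserving f μ μ) (hgm : Measurable g)
    (hg : Integrable g μ) (n : ℕ) : 0 ≤ ∫ x in {x | 0 < birkhoffMax f g n x}, g x ∂μ := by
  set M := birkhoffMax f g n
  set A := {x | 0 < M x}
  have hA : MeasurableSet A :=
    measurableSet_lt measurable_const (measurable_birkhoffMax hf.measurable hgm n)
  have hM : Integrable M μ := integrable_birkhoffMax hf hg n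
  have hMf : Integrable (M ∘ f) μ := hf.integrable_comp_of_integrable hM
  have hdrop (x : α) (hx : x ∈ A) : M x - M (f x) ≤ g x := by
    have := (le_max_iff.1 (birkhoffMax_le_max_zero_add n x)).resolve_left (not_le.2 hx)
    linarith
  calc 0 = ∫ x in A, M x ∂μ - ∫ x, M (f x) ∂μ := by
        rw [setIntegral_eq_integral_of_forall_compl_eq_zero (s := A) fun x hx =>
          le_antisymm (not_lt.1 hx) (birkhoffMax_nonneg n x),
          ← integral_map hf.aemeasurable (by rw [hf.map_eq]; exact hM.1), hf.map_eq, sub_self]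
    _ ≤ ∫ x in A, M x ∂μ - ∫ x in A, M (f x) ∂μ :=
        sub_le_sub_left (setIntegral_le_integral hMf
          (Eventually.of_forall fun x => birkhoffMax_nonneg n (f x))) _
    _ = ∫ x in A, (M x - M (f x)) ∂μ := (integral_sub hM.integrableOn hMf.integrableOn).symm
    _ ≤ ∫ x in A, g x ∂μ :=
        setIntegral_mono_on (hM.integrableOn.sub hMf.integrableOn) hg.integrableOn hA hdrop

lemma Ergodic.ae_bddAbove_birkhoffSum_of_measurable [IsFiniteMeasure μ] (hf : Ergodic f μ)
    (hgm : Measurable g) (hg : Integrable g μ) (hneg : ∫ x, g x ∂μ < 0) :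
    ∀ᵐ x ∂μ, BddAbove (range fun n => birkhoffSum f g n x) := by
  set U := {x | BddAbove (range fun n => birkhoffSum f g n x)}
  have hU : MeasurableSet U :=
    measurableSet_bddAbove_range (measurable_birkhoffSum hf.measurable hgm)
  rcases hf.ae_empty_or_univ_of_ae_le_preimage hU.nullMeasurableSet
    (Eventually.of_forall fun x hx => bddAbove_birkhoffSum_apply hx) with hU0 | hU1
  · -- Otherwise the sets `{0 < birkhoffMax f g n}` exhaust `α`, and the maximal ergodic theorem
    -- forces `0 ≤ ∫ g`.
    exfalso
    set A : ℕ → Set α := fun n => {x | 0 < birkhoffMax f g n x}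
    have hcover : ∀ᵐ x ∂μ, x ∈ ⋃ n, A n := by
      filter_upwards [ae_eq_empty.1 hU0 |> measure_eq_zero_iff_ae_notMem.1] with x hx
      obtain ⟨n, hn⟩ : ∃ n, 0 < birkhoffSum f g n x := by
        by_contra! h
        exact hx ⟨0, forall_mem_range.2 h⟩
      exact mem_iUnion.2 ⟨n, hn.trans_le (birkhoffSum_le_birkhoffMax le_rfl x)⟩
    have hAm (n : ℕ) : MeasurableSet (A n) :=
      measurableSet_lt measurable_const (measurable_birkhoffMax hf.measurable hgm n)
    have hAmono : Monotone A := fun m n hmn =>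
      ofPred_subset_ofPred.2 fun x hx => hx.trans_le (birkhoffMax_mono hmn x)
    have hlim := tendsto_setIntegral_of_monotone hAm hAmono hg.integrableOn
    rw [Measure.restrict_eq_self_of_ae_mem hcover] at hlim
    exact hneg.not_ge (ge_of_tendsto' hlim fun n => setIntegral_birkhoffMax_pos_nonneg
      hf.toMeasurePreserving hgm hg n)
  · exact ae_eq_univ.1 hU1 |> measure_eq_zero_iff_ae_notMem.1 |>.mono fun x hx => not_not.1 hx

theorem Ergodic.ae_bddAbove_birkhoffSum [IsFiniteMeasure μ] (hf : Ergodic f μ)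
    (hg : Integrable g μ) (hneg : ∫ x, g x ∂μ < 0) :
    ∀ᵐ x ∂μ, BddAbove (range fun n => birkhoffSum f g n x) := by
  set g' := hg.aemeasurable.mk g
  have hgg' : g =ᵐ[μ] g' := hg.aemeasurable.ae_eq_mk
  have hsum : ∀ᵐ x ∂μ, ∀ n, birkhoffSum f g n x = birkhoffSum f g' n x := ae_all_iff.2 fun n =>
    hf.quasiMeasurePreserving.birkhoffSum_ae_eq_of_ae_eq hgg' n
  filter_upwards [hsum, hf.ae_bddAbove_birkhoffSum_of_measurable hg.aemeasurable.measurable_mk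
    (hg.congr hgg') (integral_congr_ae hgg' ▸ hneg)] with x hx hbdd
  simpa only [hx] using hbdd

theorem Ergodic.ae_tendsto_birkhoffSum_atTop [IsProbabilityMeasure μ] (hf : Ergodic f μ)
    (hg : Integrable g μ) (hpos : 0 < ∫ x, g x ∂μ) :
    ∀ᵐ x ∂μ, Tendsto (fun n => birkhoffSum f g n x) atTop atTop := by
  obtain ⟨c, hc0, hcg⟩ := exists_between hpos
  have hneg : ∫ x, (c - g x) ∂μ < 0 := by
    rw [integral_sub (integrable_const c) hg, integral_const, probReal_univ, one_smul]
    linarith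
  filter_upwards [hf.ae_bddAbove_birkhoffSum ((integrable_const c).sub hg) hneg]
    with x ⟨C, hC⟩
  have hlow (n : ℕ) : n * c - C ≤ birkhoffSum f g n x := by
    have := hC (mem_range_self n)
    rw [birkhoffSum_sub, birkhoffSum_const] at this
    linarith
  refine tendsto_atTop_mono hlow (tendsto_atTop_add_const_right _ _ ?_)
  exact tendsto_natCast_atTop_atTop.atTop_mul_const (by positivity)

lemma tendsto_integral_pos_sub_atTop [IsFiniteMeasure μ] (hg : Integrable g μ) :
    Tendsto (fun a : ℝ => ∫ x, pos (g x - a) ∂μ) atTop (𝓝 0) := by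
  have hlim := tendsto_integral_filter_of_dominated_convergence (μ := μ) (l := atTop)
    (F := fun (a : ℝ) x => pos (g x - a)) (f := fun _ => 0) (fun x => |g x|)
    (Eventually.of_forall fun a => (hg.sub (integrable_const a)).pos_part.aestronglyMeasurable)
    ((eventually_ge_atTop 0).mono fun a ha => Eventually.of_forall fun x => by
      rw [Real.norm_of_nonneg (pos_nonneg _)]
      exact max_le (by linarith [le_abs_self (g x)]) (abs_nonneg _))
    hg.abs
    (Eventually.of_forall fun x => tendsto_const_nhds.congr' <|
      (eventually_ge_atTop (g x)).mono fun a ha => (max_eq_right (by linarith)).symm)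
  simpa using hlim

lemma ae_forall_iterate {f : α → α} (hf : MeasurePreserving f μ μ) {P : α → Prop}
    (h : ∀ᵐ x ∂μ, P x) : ∀ᵐ x ∂μ, ∀ n, P (f^[n] x) :=
  ae_all_iff.2 fun n => (hf.iterate n).quasiMeasurePreserving.ae h

lemma MeasureTheory.MeasurePreserving.ae_apply_iff {e : α ≃ᵐ α} (he : MeasurePreserving e μ μ)
    {P : α → Prop} : (∀ᵐ x ∂μ, P (e x)) ↔ ∀ᵐ x ∂μ, P x := by
  rw [← e.measurableEmbedding.ae_map_iff, he.map_eq]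

lemma MeasureTheory.MeasurePreserving.ae_exists_iterate_le [IsFiniteMeasure μ] {f : α → α}
    (hf : MeasurePreserving f μ μ) {W : α → ℝ} (hW : Measurable W) {S : ℕ → α → ℝ}
    (hS : ∀ᵐ x ∂μ, Tendsto (S · x) atTop atTop) : ∀ᵐ x ∂μ, ∃ n, W (f^[n] x) ≤ S n x := by
  -- Poincaré recurrence to each sublevel set `{W ≤ M}`.
  have hrec : ∀ᵐ x ∂μ, ∀ M : ℕ, W x ≤ M → ∃ᶠ n in atTop, W (f^[n] x) ≤ M :=
    ae_all_iff.2 fun M => hf.conservative.ae_mem_imp_frequently_image_mem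
      (measurableSet_le hW measurable_const).nullMeasurableSet
  filter_upwards [hrec, hS] with x hx hSx
  obtain ⟨n, hWn, hSn⟩ :=
    ((hx ⌈W x⌉₊ (Nat.le_ceil _)).and_eventually (hSx.eventually_ge_atTop ⌈W x⌉₊)).exists
  exact ⟨n, hWn.trans hSn⟩

lemma integral_pos_of_ae_pos [NeZero μ] {g : α → ℝ} (hg : Integrable g μ)
    (hpos : ∀ᵐ x ∂μ, 0 < g x) : 0 < ∫ x, g x ∂μ := by
  rw [integral_pos_iff_support_of_nonneg_ae (hpos.mono fun _ h => h.le) hg, pos_iff_ne_zero]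
  intro h
  rw [μ.measure_support_eq_zero_iff] at h
  obtain ⟨x, hx, hx0⟩ := (hpos.and h).exists
  exact hx.ne' hx0

end Ergodic

section Loynes

variable {Ω : Type*} {T : Ω → Ω} {σ τ : Ω → ℝ}

lemma Zterm_zero (ω : Ω) : Zterm T σ τ 0 ω = σ ω := by
  simp [Zterm]

lemma Zterm_eq_sub_birkhoffSum (k : ℕ) (ω : Ω) :
    Zterm T σ τ k ω = σ (T^[k] ω) - birkhoffSum T τ k (T ω) := by
  have h : ∑ i ∈ Finset.Icc 1 k, τ (T^[i] ω) = ∑ i ∈ Finset.range k, τ (T^[i + 1] ω) := by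
    rw [Finset.range_eq_Ico, Finset.sum_Ico_add' (fun i => τ (T^[i] ω)), zero_add,
      Finset.Ico_add_one_right_eq_Icc]
  simp only [Zterm, h, birkhoffSum, Function.iterate_succ_apply]

lemma Zterm_succ_of_apply_eq {x y : Ω} (hxy : T y = x) (k : ℕ) :
    Zterm T σ τ (k + 1) y = Zterm T σ τ k x - τ x := by
  rw [Zterm_eq_sub_birkhoffSum, Zterm_eq_sub_birkhoffSum, birkhoffSum_succ',
    Function.iterate_succ_apply, hxy]
  ring

lemma bddAbove_Zterm_of_apply_eq {x y : Ω} (hxy : T y = x)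
    (hb : BddAbove (range fun k => Zterm T σ τ k x)) :
    BddAbove (range fun k => Zterm T σ τ k y) := by
  obtain ⟨c, hc⟩ := hb
  refine ⟨max (σ y) (c - τ x), forall_mem_range.2 fun k => ?_⟩
  cases k with
  | zero => exact (Zterm_zero y).trans_le (le_max_left _ _)
  | succ k =>
    rw [Zterm_succ_of_apply_eq hxy]
    exact le_max_of_le_right (sub_le_sub_right (hc (mem_range_self k)) _)

variable (T σ τ) in
noncomputable def tailSup (ℓ : ℕ) (ω : Ω) : ℝ := ⨆ k : {k : ℕ // ℓ ≤ k}, Zterm T σ τ k ω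

lemma Zfam_eq_pos_tailSup (ℓ : ℕ) (ω : Ω) : Zfam T σ τ ℓ ω = pos (tailSup T σ τ ℓ ω) := rfl

lemma le_tailSup {ω : Ω} (hb : BddAbove (range fun k => Zterm T σ τ k ω)) {ℓ k : ℕ}
    (hk : ℓ ≤ k) : Zterm T σ τ k ω ≤ tailSup T σ τ ℓ ω :=
  le_ciSup (f := fun k : {k : ℕ // ℓ ≤ k} => Zterm T σ τ k ω)
    (hb.mono (range_comp_subset_range Subtype.val fun k => Zterm T σ τ k ω)) ⟨k, hk⟩

lemma tailSup_le {ω : Ω} {ℓ : ℕ} {c : ℝ} (h : ∀ k, ℓ ≤ k → Zterm T σ τ k ω ≤ c) :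
    tailSup T σ τ ℓ ω ≤ c :=
  have : Nonempty {k : ℕ // ℓ ≤ k} := ⟨⟨ℓ, le_rfl⟩⟩
  ciSup_le fun k => h k k.2

lemma tailSup_anti {ω : Ω} (hb : BddAbove (range fun k => Zterm T σ τ k ω)) {ℓ ℓ' : ℕ}
    (h : ℓ ≤ ℓ') : tailSup T σ τ ℓ' ω ≤ tailSup T σ τ ℓ ω :=
  tailSup_le fun _ hk => le_tailSup hb (h.trans hk)

lemma tailSup_zero {ω : Ω} (hb : BddAbove (range fun k => Zterm T σ τ k ω)) :
    tailSup T σ τ 0 ω = max (σ ω) (tailSup T σ τ 1 ω) := by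
  refine le_antisymm (tailSup_le fun k _ => ?_) (max_le ?_ (tailSup_anti hb zero_le_one))
  · cases k with
    | zero => exact (Zterm_zero ω).trans_le (le_max_left _ _)
    | succ k => exact le_max_of_le_right (le_tailSup hb (Nat.succ_pos k))
  · exact (Zterm_zero ω).symm.trans_le (le_tailSup hb le_rfl)

lemma tailSup_succ_of_apply_eq {x y : Ω} (hxy : T y = x)
    (hb : BddAbove (range fun k => Zterm T σ τ k x)) (ℓ : ℕ) :
    tailSup T σ τ (ℓ + 1) y = tailSup T σ τ ℓ x - τ x := by
  refine le_antisymm (tailSup_le fun k hk => ?_) (sub_le_iff_le_add.2 (tailSup_le fun k hk => ?_))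
  · obtain ⟨k, rfl⟩ : ∃ m, k = m + 1 := ⟨k - 1, by omega⟩
    rw [Zterm_succ_of_apply_eq hxy]
    exact sub_le_sub_right (le_tailSup hb (by omega)) _
  · rw [← sub_le_iff_le_add, ← Zterm_succ_of_apply_eq hxy]
    exact le_tailSup (bddAbove_Zterm_of_apply_eq hxy hb) (by omega)

lemma Zfam_succ_of_apply_eq {x y : Ω} (hxy : T y = x)
    (hb : BddAbove (range fun k => Zterm T σ τ k x)) (hτ : 0 ≤ τ x) (ℓ : ℕ) :
    Zfam T σ τ (ℓ + 1) y = pos (Zfam T σ τ ℓ x - τ x) := by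
  rw [Zfam_eq_pos_tailSup, Zfam_eq_pos_tailSup, tailSup_succ_of_apply_eq hxy hb, pos_pos_sub hτ]

lemma Zfam_one_of_apply_eq {x y : Ω} (hxy : T y = x)
    (hb : BddAbove (range fun k => Zterm T σ τ k x)) (hσ : 0 ≤ σ x) :
    Zfam T σ τ 1 y = pos (max (Zfam T σ τ 1 x) (σ x) - τ x) := by
  rw [Zfam_eq_pos_tailSup, Zfam_eq_pos_tailSup, tailSup_succ_of_apply_eq hxy hb, tailSup_zero hb]
  congr 2
  rw [pos, max_assoc, max_eq_right hσ, max_comm]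

variable (T σ τ) in
noncomputable def Zvec (p : ℕ) (ω : Ω) : Fin p → ℝ := fun i => Zfam T σ τ (p - i) ω

lemma osorted_Zvec {p : ℕ} {ω : Ω} (hb : BddAbove (range fun k => Zterm T σ τ k ω)) :
    OSorted (Zvec T σ τ p ω) :=
  ⟨fun _ => pos_nonneg _, fun _ _ hij => pos_le_pos (tailSup_anti hb (Nat.sub_le_sub_left hij p))⟩

lemma Gamma_apply_of_lt {p : ℕ} {s t : ℝ} {u : Fin p → ℝ} {j : Fin p} (h : (j : ℕ) + 1 < p) :
    Gamma p s t u j = pos (u ⟨j + 1, h⟩ - t) :=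
  dif_pos h

lemma Gamma_apply_of_not_lt {p : ℕ} {s t : ℝ} {u : Fin p → ℝ} {j : Fin p}
    (h : ¬(j : ℕ) + 1 < p) : Gamma p s t u j = pos (max (u j) s - t) :=
  dif_neg h

lemma Zvec_eq_Gamma_of_apply_eq {p : ℕ} {x y : Ω} (hxy : T y = x)
    (hb : BddAbove (range fun k => Zterm T σ τ k x)) (hσ : 0 ≤ σ x) (hτ : 0 ≤ τ x) :
    Zvec T σ τ p y = Gamma p (σ x) (τ x) (Zvec T σ τ p x) := by
  funext j
  by_cases h : (j : ℕ) + 1 < p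
  · rw [Gamma_apply_of_lt h, Zvec, Zvec, show p - j = p - (j + 1) + 1 by omega]
    exact Zfam_succ_of_apply_eq hxy hb hτ _
  · rw [Gamma_apply_of_not_lt h, Zvec, Zvec, show p - j = 1 by omega]
    exact Zfam_one_of_apply_eq hxy hb hσ

lemma Zterm_sub_le_Gamma {p k : ℕ} {x : Ω} {u : Fin p → ℝ}
    (hu : ∀ j : Fin p, p - j ≤ k → Zterm T σ τ k x ≤ u j) (j : Fin p) (hj : p - j ≤ k + 1) :
    Zterm T σ τ k x - τ x ≤ Gamma p (σ x) (τ x) u j := by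
  by_cases h : (j : ℕ) + 1 < p
  · rw [Gamma_apply_of_lt h]
    exact (sub_le_sub_right (hu _ (by simp only; omega)) _).trans (le_pos _)
  · rw [Gamma_apply_of_not_lt h]
    refine (sub_le_sub_right ?_ _).trans (le_pos _)
    cases k with
    | zero => exact (Zterm_zero x).trans_le (le_max_right _ _)
    | succ k => exact (hu j (by omega)).trans (le_max_left _ _)

lemma le_max_sub_birkhoffSum {W : Ω → ℝ} {ω : Ω}
    (hW : ∀ n, W (T^[n] ω) = pos (max (W (T^[n + 1] ω)) (σ (T^[n + 1] ω)) - τ (T^[n + 1] ω)))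
    (hτ : ∀ n, 0 ≤ τ (T^[n] ω)) (hb : BddAbove (range fun k => Zterm T σ τ k ω)) (N : ℕ) :
    W ω ≤ max (W (T^[N] ω) - birkhoffSum T τ N (T ω)) (Zfam T σ τ 1 ω) := by
  induction N with
  | zero => simp
  | succ N ih =>
    have hx : T^[N] (T ω) = T^[N + 1] ω := (Function.iterate_succ_apply T N ω).symm
    have hS : 0 ≤ birkhoffSum T τ N (T ω) :=
      Finset.sum_nonneg fun k _ => by rw [← Function.iterate_succ_apply]; exact hτ _
    have hZ : σ (T^[N + 1] ω) - (birkhoffSum T τ N (T ω) + τ (T^[N + 1] ω)) ≤ Zfam T σ τ 1 ω := by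
      have := (le_tailSup hb (Nat.succ_pos N)).trans (le_pos (tailSup T σ τ 1 ω))
      rwa [Zterm_eq_sub_birkhoffSum, birkhoffSum_succ, hx] at this
    have hZ₁ : 0 ≤ Zfam T σ τ 1 ω := pos_nonneg _
    rw [birkhoffSum_succ, hx]
    have h₁ := le_max_left (W (T^[N + 1] ω) - (birkhoffSum T τ N (T ω) + τ (T^[N + 1] ω)))
      (Zfam T σ τ 1 ω)
    have h₂ := le_max_right (W (T^[N + 1] ω) - (birkhoffSum T τ N (T ω) + τ (T^[N + 1] ω)))
      (Zfam T σ τ 1 ω)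
    refine ih.trans (max_le ?_ h₂)
    rw [hW N]
    refine sub_le_iff_le_add.2 (max_le (sub_le_iff_le_add.2 (max_le ?_ ?_)) ?_) <;> linarith

end Loynes

section LoynesErgodic

variable {Ω : Type*} [MeasurableSpace Ω] {μ : Measure Ω} {θ : Ω ≃ᵐ Ω} {σ τ : Ω → ℝ} {p : ℕ}

theorem Ergodic.ae_bddAbove_Zterm [IsFiniteMeasure μ] {T : Ω → Ω} (hT : Ergodic T μ)
    (hσ : Integrable σ μ) (hτ : Integrable τ μ) (hpos : 0 < ∫ x, τ x ∂μ) :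
    ∀ᵐ ω ∂μ, BddAbove (range fun k => Zterm T σ τ k ω) := by
  obtain ⟨a, ha⟩ := ((tendsto_integral_pos_sub_atTop hσ).eventually (gt_mem_nhds hpos)).exists
  have hσa : Integrable (fun x => pos (σ x - a)) μ := (hσ.sub (integrable_const a)).pos_part
  have hneg : ∫ x, (pos (σ x - a) - τ x) ∂μ < 0 := by
    rw [integral_sub hσa hτ]
    exact sub_neg.2 ha
  filter_upwards [hT.ae_bddAbove_birkhoffSum (g := fun x => pos (σ x - a) - τ x) (hσa.sub hτ)
    hneg] with ω ⟨C, hC⟩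
  -- `Zterm k ω ≤ a + τ ω + birkhoffSum T ((σ - a)⁺ - τ) (k + 1) ω`
  refine ⟨a + C + τ ω, forall_mem_range.2 fun k => ?_⟩
  have hsum : birkhoffSum T (fun x => pos (σ x - a) - τ x) (k + 1) ω =
      birkhoffSum T (fun x => pos (σ x - a)) (k + 1) ω - birkhoffSum T τ (k + 1) ω :=
    birkhoffSum_sub _ _ _ _ _
  have hsingle : pos (σ (T^[k] ω) - a) ≤ birkhoffSum T (fun x => pos (σ x - a)) (k + 1) ω := by
    rw [birkhoffSum_succ]
    exact le_add_of_nonneg_left (Finset.sum_nonneg fun _ _ => pos_nonneg _)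
  have hτsum := birkhoffSum_succ' T τ k ω
  have hCk := hC (mem_range_self (k + 1))
  rw [Zterm_eq_sub_birkhoffSum]
  linarith [le_pos (σ (T^[k] ω) - a)]

lemma ae_Zvec_le (hθ : MeasurePreserving θ μ μ) {Z : Ω → Fin p → ℝ}
    (hZ : ∀ᵐ ω ∂μ, OSorted (Z ω)) (hrec : ∀ᵐ ω ∂μ, Z (θ ω) = Gamma p (σ ω) (τ ω) (Z ω)) :
    ∀ᵐ ω ∂μ, Zvec θ.symm σ τ p ω ≤ Z ω := by
  have hterm (k : ℕ) : ∀ᵐ ω ∂μ, ∀ j : Fin p, p - j ≤ k → Zterm θ.symm σ τ k ω ≤ Z ω j := by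
    induction k with
    | zero => exact Eventually.of_forall fun ω j hj => absurd hj (by have := j.isLt; omega)
    | succ k ih =>
      rw [← hθ.ae_apply_iff]
      filter_upwards [ih, hrec] with ω hω hZω j hj
      rw [Zterm_succ_of_apply_eq (θ.symm_apply_apply ω), hZω]
      exact Zterm_sub_le_Gamma hω j hj
  filter_upwards [ae_all_iff.2 hterm, hZ] with ω hω hZω j
  exact max_le (tailSup_le fun k hk => hω k j hk) (hZω.1 j)

lemma ae_le_of_Gamma_rec (hθ : MeasurePreserving θ μ μ) {Z Y : Ω → Fin p → ℝ}
    (hZ : ∀ᵐ ω ∂μ, Z (θ ω) = Gamma p (σ ω) (τ ω) (Z ω))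
    (hY : ∀ᵐ ω ∂μ, Y (θ ω) = Gamma p (σ ω) (τ ω) (Y ω))
    (hlast : ∀ᵐ ω ∂μ, ∀ j : Fin p, (j : ℕ) + 1 = p → Z ω j ≤ Y ω j) :
    ∀ᵐ ω ∂μ, Z ω ≤ Y ω := by
  have h (m : ℕ) : ∀ᵐ ω ∂μ, ∀ j : Fin p, (j : ℕ) + 1 + m = p → Z ω j ≤ Y ω j := by
    induction m with
    | zero => exact hlast
    | succ m ih =>
      rw [← hθ.ae_apply_iff]
      filter_upwards [ih, hZ, hY] with ω hω hZω hYω j hj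
      have hj' : (j : ℕ) + 1 < p := by omega
      rw [hZω, hYω, Gamma_apply_of_lt hj', Gamma_apply_of_lt hj']
      exact pos_le_pos (sub_le_sub_right (hω _ (by simp only; omega)) _)
  filter_upwards [ae_all_iff.2 h] with ω hω j
  exact hω (p - 1 - j) j (by omega)

lemma ae_le_Zfam_one [IsFiniteMeasure μ] (hθ : MeasurePreserving θ μ μ) {W : Ω → ℝ}
    (hW : Measurable W) (hrec : ∀ᵐ ω ∂μ, W (θ ω) = pos (max (W ω) (σ ω) - τ ω))
    (hτ : ∀ᵐ ω ∂μ, 0 ≤ τ ω) (hb : ∀ᵐ ω ∂μ, BddAbove (range fun k => Zterm θ.symm σ τ k ω))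
    (hS : ∀ᵐ ω ∂μ, Tendsto (fun n => birkhoffSum θ.symm τ n ω) atTop atTop) :
    ∀ᵐ ω ∂μ, W ω ≤ Zfam θ.symm σ τ 1 ω := by
  have hT : MeasurePreserving θ.symm μ μ := hθ.symm θ
  have hrecT : ∀ᵐ ω ∂μ, ∀ n, W (θ.symm^[n] ω) = pos (max (W (θ.symm^[n + 1] ω))
      (σ (θ.symm^[n + 1] ω)) - τ (θ.symm^[n + 1] ω)) := by
    filter_upwards [ae_forall_iterate hT (hT.quasiMeasurePreserving.ae hrec)] with ω hω n
    simpa [Function.iterate_succ_apply'] using hω n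
  filter_upwards [hrecT, ae_forall_iterate hT hτ, hb,
    hT.ae_exists_iterate_le hW (S := fun n ω => birkhoffSum θ.symm τ n (θ.symm ω))
      (hT.quasiMeasurePreserving.ae hS)] with ω hrecω hτω hbω ⟨N, hN⟩
  refine (le_max_sub_birkhoffSum hrecω hτω hbω N).trans (max_le ?_ le_rfl)
  exact (sub_nonpos.2 hN).trans (pos_nonneg _)

lemma ae_last_le_Zvec [IsFiniteMeasure μ] (hθ : MeasurePreserving θ μ μ) {Z : Ω → Fin p → ℝ}
    (hZm : Measurable Z) (hrec : ∀ᵐ ω ∂μ, Z (θ ω) = Gamma p (σ ω) (τ ω) (Z ω))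
    (hτ : ∀ᵐ ω ∂μ, 0 ≤ τ ω) (hb : ∀ᵐ ω ∂μ, BddAbove (range fun k => Zterm θ.symm σ τ k ω))
    (hS : ∀ᵐ ω ∂μ, Tendsto (fun n => birkhoffSum θ.symm τ n ω) atTop atTop) :
    ∀ᵐ ω ∂μ, ∀ j : Fin p, (j : ℕ) + 1 = p → Z ω j ≤ Zvec θ.symm σ τ p ω j := by
  refine ae_all_iff.2 fun j => ?_
  by_cases hj : (j : ℕ) + 1 = p
  · filter_upwards [ae_le_Zfam_one hθ (W := fun ω => Z ω j) ((measurable_pi_apply j).comp hZm)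
      (hrec.mono fun ω h => (congrFun h j).trans (Gamma_apply_of_not_lt (by omega))) hτ hb hS]
      with ω hω _
    rwa [Zvec, show p - j = 1 by omega]
  · exact Eventually.of_forall fun _ h => absurd h hj

end LoynesErgodic

theorem stmt4_general {Ω : Type*} [MeasurableSpace Ω] (μ : MeasureTheory.Measure Ω)
    [MeasureTheory.IsProbabilityMeasure μ]
    (θ : Ω ≃ᵐ Ω) (hergo : Ergodic (⇑θ) μ)
    (σ τ : Ω → ℝ) (hσint : MeasureTheory.Integrable σ μ) (hτint : MeasureTheory.Integrable τ μ)
    (hσ0 : ∀ᵐ ω ∂μ, 0 ≤ σ ω) (hτ0 : ∀ᵐ ω ∂μ, 0 < τ ω)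
    (p : ℕ) :
    (∀ᵐ ω ∂μ, ∀ i : Fin p,
      BddAbove (Set.range fun k : {k : ℕ // p - (i : ℕ) ≤ k} => Zterm (⇑θ.symm) σ τ (k : ℕ) ω)) ∧
    (∀ᵐ ω ∂μ, OSorted fun i : Fin p => Zfam (⇑θ.symm) σ τ (p - (i : ℕ)) ω) ∧
    (∀ᵐ ω ∂μ, (fun i : Fin p => Zfam (⇑θ.symm) σ τ (p - (i : ℕ)) (θ ω)) =
      Gamma p (σ ω) (τ ω) fun i : Fin p => Zfam (⇑θ.symm) σ τ (p - (i : ℕ)) ω) ∧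
    (∀ Z' : Ω → Fin p → ℝ, Measurable Z' → (∀ᵐ ω ∂μ, OSorted (Z' ω)) →
      (∀ᵐ ω ∂μ, Z' (θ ω) = Gamma p (σ ω) (τ ω) (Z' ω)) →
      ∀ᵐ ω ∂μ, Z' ω = fun i : Fin p => Zfam (⇑θ.symm) σ τ (p - (i : ℕ)) ω) := by
  have hθ := hergo.toMeasurePreserving
  have hT : Ergodic (⇑θ.symm) μ := hergo.symm
  have hτpos : 0 < ∫ ω, τ ω ∂μ := integral_pos_of_ae_pos hτint hτ0
  have hb := hT.ae_bddAbove_Zterm hσint hτint hτpos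
  have hrec : ∀ᵐ ω ∂μ, Zvec θ.symm σ τ p (θ ω) = Gamma p (σ ω) (τ ω) (Zvec θ.symm σ τ p ω) := by
    filter_upwards [hb, hσ0, hτ0] with ω hbω hσω hτω
    exact Zvec_eq_Gamma_of_apply_eq (θ.symm_apply_apply ω) hbω hσω hτω.le
  refine ⟨?_, hb.mono fun ω => osorted_Zvec, hrec, fun Z hZm hZs hZrec => ?_⟩
  · filter_upwards [hb] with ω hbω i
    exact hbω.mono (range_comp_subset_range Subtype.val fun k => Zterm θ.symm σ τ k ω)
  · filter_upwards [ae_Zvec_le hθ hZs hZrec, ae_le_of_Gamma_rec hθ hZrec hrec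
      (ae_last_le_Zvec hθ hZm hZrec (hτ0.mono fun _ h => h.le) hb
        (hT.ae_tendsto_birkhoffSum_atTop hτint hτpos))] with ω h₁ h₂
    exact le_antisymm h₂ h₁

theorem stmt4 {Ω : Type*} [MeasurableSpace Ω] (μ : MeasureTheory.Measure Ω)
    [MeasureTheory.IsProbabilityMeasure μ]
    (θ : Ω ≃ᵐ Ω) (hergo : Ergodic (⇑θ) μ)
    (σ τ : Ω → ℝ) (hσint : MeasureTheory.Integrable σ μ) (hτint : MeasureTheory.Integrable τ μ)
    (hσ0 : ∀ᵐ ω ∂μ, 0 ≤ σ ω) (hτ0 : ∀ᵐ ω ∂μ, 0 < τ ω)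
    (p : ℕ) (hp : 1 ≤ p) :
    (∀ᵐ ω ∂μ, ∀ i : Fin p,
      BddAbove (Set.range fun k : {k : ℕ // p - (i : ℕ) ≤ k} => Zterm (⇑θ.symm) σ τ (k : ℕ) ω)) ∧
    (∀ᵐ ω ∂μ, OSorted fun i : Fin p => Zfam (⇑θ.symm) σ τ (p - (i : ℕ)) ω) ∧
    (∀ᵐ ω ∂μ, (fun i : Fin p => Zfam (⇑θ.symm) σ τ (p - (i : ℕ)) (θ ω)) =
      Gamma p (σ ω) (τ ω) fun i : Fin p => Zfam (⇑θ.symm) σ τ (p - (i : ℕ)) ω) ∧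
    (∀ Z' : Ω → Fin p → ℝ, Measurable Z' → (∀ᵐ ω ∂μ, OSorted (Z' ω)) →
      (∀ᵐ ω ∂μ, Z' (θ ω) = Gamma p (σ ω) (τ ω) (Z' ω)) →
      ∀ᵐ ω ∂μ, Z' ω = fun i : Fin p => Zfam (⇑θ.symm) σ τ (p - (i : ℕ)) ω) :=
  stmt4_general μ θ hergo σ τ hσint hτint hσ0 hτ0 p
end

section
/- Fix reals σ ≥ 0 and τ ≥ 0, and integers S ≥ 2, 1 ≤ p ≤ S−1. For all u, v ∈ Ō_S with u(i) ≤ v(i) for all i ∈ {1,…,S}, one has G^p(u)(i) ≤ Φ^p(v)(i) for all i ∈ {1,…,S}. -/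
open MeasureTheory ProbabilityTheory Filter

/-!
Both branches of `G^p` sort the vector `[u + σ e_q − τ𝟙]⁺`, where the arrival goes to the first
server if it is idle and to server `p + 1` otherwise. The `j`-th smallest coordinate of a vector is
at most `c` as soon as `j` of its coordinates are. The first `j` coordinates give the bound
`[max(u(j), u(q) + σ) − τ]⁺` (even `[u(j) − τ]⁺` when `j < q`), and the first `j + 1`
coordinates other than `q` give `[u(j + 1) − τ]⁺`. Against `u ≤ v` these are exactly the two
arguments of the minimum defining `Φ^p(v)(j)`; when `u(1) > 0` also `v(1) > 0`, which switches on
the extra `v(p + 1)` in `Φ^p`.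
-/

open Finset

section SortVec

variable {n : ℕ} {w : Fin n → ℝ} {c : ℝ}

theorem sortVec_le_of_lt_card {i : Fin n} (h : (i : ℕ) < #{k | w k ≤ c}) : sortVec w i ≤ c := by
  by_contra! hc
  have hsub : ({m | sortVec w m ≤ c} : Finset (Fin n)) ⊆ Iio i := fun m hm => by
    simp only [mem_filter, mem_univ, true_and] at hm
    exact mem_Iio.2 (lt_of_not_ge fun him => (hc.trans_le (Tuple.monotone_sort w him)).not_ge hm)
  have hcard : #({m | sortVec w m ≤ c} : Finset (Fin n)) = #{k | w k ≤ c} :=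
    card_equiv (Tuple.sort w) fun m => by simp only [mem_filter, mem_univ, true_and]; rfl
  have := card_le_card hsub
  simp only [Fin.card_Iio] at this
  omega

theorem sortVec_le_of_forall_le {i : Fin n} (h : ∀ k ≤ i, w k ≤ c) : sortVec w i ≤ c :=
  sortVec_le_of_lt_card <|
    calc (i : ℕ) < #(Iic i) := by simp
      _ ≤ _ := card_le_card fun k hk => by simpa using h k (mem_Iic.1 hk)

theorem sortVec_le_of_forall_le_of_ne {i j : Fin n} (hij : (j : ℕ) = i + 1) (a : Fin n)
    (h : ∀ k ≤ j, k ≠ a → w k ≤ c) : sortVec w i ≤ c :=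
  sortVec_le_of_lt_card <|
    calc (i : ℕ) < #((Iic j).erase a) := by
          have := pred_card_le_card_erase (s := Iic j) (a := a)
          simp only [Fin.card_Iic] at this
          omega
      _ ≤ _ := card_le_card fun k hk => by
          obtain ⟨hka, hkj⟩ := mem_erase.1 hk
          simpa using h k (mem_Iic.1 hkj) hka

end SortVec

theorem pos_sub_right_mono (τ : ℝ) : Monotone fun x => pos (x - τ) :=
  fun _ _ h => max_le_max (sub_le_sub_right h τ) le_rfl

def workloadStep {n : ℕ} (u : Fin n → ℝ) (q : Fin n) (σ τ : ℝ) : Fin n → ℝ :=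
  fun k => pos (u k + (if k = q then σ else 0) - τ)

theorem Gp_eq_sortVec_workloadStep {S p : ℕ} (hS : 0 < S) (hp : p < S) (σ τ : ℝ)
    (u : Fin S → ℝ) :
    Gp S p hS σ τ u =
      sortVec (workloadStep u (if u ⟨0, hS⟩ = 0 then ⟨0, hS⟩ else ⟨p, hp⟩) σ τ) := by
  unfold Gp Gmap workloadStep
  split_ifs <;> simp only [Fin.ext_iff]

section WorkloadStep

variable {n : ℕ} {u : Fin n → ℝ} (hu : Monotone u) (q : Fin n) (σ τ : ℝ)
include hu

theorem sortVec_workloadStep_le_max (i : Fin n) :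
    sortVec (workloadStep u q σ τ) i ≤ pos (max (u i) (u q + σ) - τ) := by
  refine sortVec_le_of_forall_le fun k hk => pos_sub_right_mono τ ?_
  split_ifs with hkq
  · exact hkq ▸ le_max_right _ _
  · exact (add_zero (u k)).symm ▸ le_max_of_le_left (hu hk)

theorem sortVec_workloadStep_le_of_lt {i : Fin n} (hiq : i < q) :
    sortVec (workloadStep u q σ τ) i ≤ pos (u i - τ) := by
  refine sortVec_le_of_forall_le fun k hk => pos_sub_right_mono τ ?_
  rw [if_neg (hk.trans_lt hiq).ne, add_zero]
  exact hu hk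

theorem sortVec_workloadStep_le_succ {i j : Fin n} (hij : (j : ℕ) = i + 1) :
    sortVec (workloadStep u q σ τ) i ≤ pos (u j - τ) := by
  refine sortVec_le_of_forall_le_of_ne hij q fun k hk hkq => pos_sub_right_mono τ ?_
  rw [if_neg hkq, add_zero]
  exact hu hk

end WorkloadStep

theorem le_Phi {S p : ℕ} (hp : p < S) {σ τ x : ℝ} {v : Fin S → ℝ} {j : Fin S}
    (hmax : x ≤ pos (max (v j)
      (σ + if p ≤ (j : ℕ) ∧ 0 < v ⟨0, by omega⟩ then v ⟨p, hp⟩ else 0) - τ))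
    (hsucc : ∀ h : (j : ℕ) + 1 < S, x ≤ pos (v ⟨j + 1, h⟩ - τ)) :
    x ≤ Phi S p hp σ τ v j := by
  have hmin : ∀ a b, pos (min a b - τ) = min (pos (a - τ)) (pos (b - τ)) := fun _ _ =>
    (pos_sub_right_mono τ).map_min
  dsimp only [Phi]
  by_cases hjp : p ≤ (j : ℕ)
  · simp only [hjp, true_and] at hmax
    by_cases hS : (j : ℕ) + 1 < S
    · rw [dif_pos hS, if_neg (by omega), hmin]
      exact le_min hmax (hsucc hS)
    · rw [dif_neg hS]
      exact hmax
  · simp only [hjp, false_and, if_false, add_zero] at hmax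
    have hS : (j : ℕ) + 1 < S := by omega
    rw [dif_pos hS, if_pos (by omega), hmin]
    exact le_min hmax (hsucc hS)

section Gp

variable {S p : ℕ} (hS : 0 < S) (hp : p < S) (σ τ : ℝ) {u v : Fin S → ℝ}
  (huv : ∀ i, u i ≤ v i)
include hp huv

theorem Gp_le_pos_max (hu : OSorted u) (hv : ∀ i, 0 ≤ v i) (j : Fin S) :
    Gp S p hS σ τ u j ≤
      pos (max (v j) (σ + if p ≤ (j : ℕ) ∧ 0 < v ⟨0, hS⟩ then v ⟨p, hp⟩ else 0) - τ) := by
  have hmono := pos_sub_right_mono τ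
  rw [Gp_eq_sortVec_workloadStep hS hp]
  by_cases h0 : u ⟨0, hS⟩ = 0
  · rw [if_pos h0]
    refine (sortVec_workloadStep_le_max hu.2 _ σ τ j).trans (hmono (max_le_max (huv j) ?_))
    rw [h0, zero_add]
    refine le_add_of_nonneg_right ?_
    split_ifs
    exacts [hv _, le_rfl]
  · rw [if_neg h0]
    have hv0 : 0 < v ⟨0, hS⟩ := (lt_of_le_of_ne (hu.1 _) (Ne.symm h0)).trans_le (huv _)
    simp only [hv0, and_true]
    split_ifs with hpj
    · refine (sortVec_workloadStep_le_max hu.2 _ σ τ j).trans (hmono (max_le_max (huv j) ?_))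
      linarith [huv ⟨p, hp⟩]
    · refine (sortVec_workloadStep_le_of_lt hu.2 ⟨p, hp⟩ σ τ (Fin.mk_lt_mk.2 ?_)).trans ?_
      · omega
      · exact hmono ((huv j).trans (le_max_left _ _))

theorem Gp_le_pos_succ (hu : Monotone u) {j : Fin S} (hj : (j : ℕ) + 1 < S) :
    Gp S p hS σ τ u j ≤ pos (v ⟨j + 1, hj⟩ - τ) := by
  rw [Gp_eq_sortVec_workloadStep hS hp]
  exact (sortVec_workloadStep_le_succ hu _ σ τ rfl).trans (pos_sub_right_mono τ (huv _))

end Gp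

theorem stmt12 (σ τ : ℝ)
    (S p : ℕ) (hp1 : 1 ≤ p) (hpS : p ≤ S - 1)
    (u v : Fin S → ℝ) (hu : OSorted u) (hv : OSorted v)
    (huv : ∀ i, u i ≤ v i) :
    ∀ i, Gp S p (by omega) σ τ u i ≤ Phi S p (by omega) σ τ v i := by
  intro j
  have hp : p < S := by omega
  exact le_Phi hp (Gp_le_pos_max _ hp σ τ huv hu hv.1 j)
    fun hj => Gp_le_pos_succ _ hp σ τ huv hu.2 hj
end

section
/- Fix reals σ ≥ 0 and τ ≥ 0, and an integer p ≥ 1. For any u, v ∈ Ō_p and any i ∈ {1,…,p}: if u(j) ≤ v(j) for all j ∈ {i,…,p}, then H^p(u)(j) ≤ Ψ^p(v)(j) for all j ∈ {i,…,p}. -/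
open MeasureTheory ProbabilityTheory Filter

/-!
Coordinate `j` of a sorted vector is at most `c` as soon as `j + 1` coordinates are. For
`H^p(u)` with `u` nondecreasing, the coordinates `0, …, j` are all at most
`[max(u j, σ) − τ]⁺` (the only `σ` is added to `u 0 = 0`), and the coordinates
`1, …, j + 1` are at most `[u (j+1) − τ]⁺` (no `σ` is added there). These are the two
terms whose minimum is `Ψ^p(v)(j)`, up to replacing `u` by the larger `v`.
-/

lemma pos_monotone : Monotone pos := fun _ _ h => max_le_max_right 0 h

lemma sortVec_apply_le_of_lt_card {n : ℕ} (w : Fin n → ℝ) {c : ℝ} {j : Fin n}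
    (s : Finset (Fin n)) (hs : ∀ k ∈ s, w k ≤ c) (hj : (j : ℕ) < s.card) :
    sortVec w j ≤ c := by
  refine (Tuple.lt_card_le_iff_apply_le_of_monotone (Tuple.monotone_sort w)).mp ?_
  calc (j : ℕ) < s.card := hj
    _ ≤ ({k | w k ≤ c} : Finset (Fin n)).card :=
      Finset.card_le_card fun k hk => by simpa using hs k hk
    _ = ({k | (w ∘ Tuple.sort w) k ≤ c} : Finset (Fin n)).card :=
      (Finset.card_equiv (Tuple.sort w) (by simp)).symm

section Hmap

variable {p : ℕ} (hp : 0 < p) (σ τ : ℝ) {u : Fin p → ℝ}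

lemma Hmap_apply_le_pos_max (hu : Monotone u) (j : Fin p) :
    Hmap p hp σ τ u j ≤ pos (max (u j) σ - τ) := by
  refine sortVec_apply_le_of_lt_card _ (Finset.Iic j) (fun k hk => ?_) (by simp)
  have hkj : u k ≤ u j := hu (Finset.mem_Iic.mp hk)
  apply pos_monotone
  split_ifs with hk0
  · have hk : k = ⟨0, hp⟩ := Fin.ext hk0.1
    have huk : u k = 0 := hk ▸ hk0.2
    linarith [le_max_right (u j) σ]
  · linarith [le_max_left (u j) σ]

lemma Hmap_apply_le_pos_succ (hu : Monotone u) (j : Fin p) (h : (j : ℕ) + 1 < p) :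
    Hmap p hp σ τ u j ≤ pos (u ⟨j + 1, h⟩ - τ) := by
  refine sortVec_apply_le_of_lt_card _ (Finset.Icc ⟨1, by omega⟩ ⟨j + 1, h⟩)
    (fun k hk => ?_) (by simp)
  obtain ⟨hk1, hkj⟩ := Finset.mem_Icc.mp hk
  have hk1 : 1 ≤ (k : ℕ) := hk1
  rw [if_neg (by omega)]
  exact pos_monotone (by linarith [hu hkj])

end Hmap

lemma le_Psi_apply {p : ℕ} (σ τ : ℝ) (v : Fin p → ℝ) (j : Fin p) {x : ℝ}
    (hmax : x ≤ pos (max (v j) σ - τ))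
    (hsucc : ∀ h : (j : ℕ) + 1 < p, x ≤ pos (v ⟨j + 1, h⟩ - τ)) :
    x ≤ Psi p σ τ v j := by
  have hmono : Monotone fun y => pos (y - τ) := fun _ _ h => pos_monotone (by linarith)
  unfold Psi
  split_ifs with h
  · rw [hmono.map_min]
    exact le_min hmax (hsucc h)
  · exact hmax

theorem stmt14 (σ τ : ℝ)
    (p : ℕ) (hp : 1 ≤ p)
    (u v : Fin p → ℝ) (hu : OSorted u) (i : Fin p)
    (huv : ∀ j : Fin p, i ≤ j → u j ≤ v j) :
    ∀ j : Fin p, i ≤ j → Hmap p (by omega) σ τ u j ≤ Psi p σ τ v j := by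
  intro j hij
  refine le_Psi_apply σ τ v j ?_ fun h => ?_
  · calc Hmap p _ σ τ u j ≤ pos (max (u j) σ - τ) := Hmap_apply_le_pos_max _ σ τ hu.2 j
      _ ≤ pos (max (v j) σ - τ) :=
        pos_monotone (by linarith [max_le_max_right σ (huv j hij)])
  · have hij' : i ≤ ⟨j + 1, h⟩ := hij.trans (Fin.mk_le_mk.mpr (Nat.le_succ _))
    calc Hmap p _ σ τ u j ≤ pos (u ⟨j + 1, h⟩ - τ) := Hmap_apply_le_pos_succ _ σ τ hu.2 j h
      _ ≤ pos (v ⟨j + 1, h⟩ - τ) := pos_monotone (by linarith [huv _ hij'])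
end

section
/- Let (Ω, F, P, θ) be a stationary ergodic quadruple carrying σ, τ as in the context. Then P(Z_1 ≤ σ) > 0, where Z_1 = [sup_{k ≥ 1}(σ∘θ^{-k} − Σ_{i=1}^{k} τ∘θ^{-i})]⁺. -/
open MeasureTheory ProbabilityTheory Filter

/-!
If `Z₁ > σ` almost surely, then `Z₁ > 0` along almost every orbit, so the recursion degenerates
to `Z₁ ∘ θ = Z₁ - τ` there and the partial sums of `τ` along the orbit stay below `Z₁`.
But `τ > 0`, so by Poincaré recurrence the orbit returns infinitely often to some set
`{τ ≥ ε}` and these partial sums diverge.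
-/

lemma pos_eq_self_of_pos {x : ℝ} (h : 0 < pos x) : pos x = x :=
  max_eq_left (lt_max_iff.1 h |>.resolve_right (lt_irrefl 0)).le

lemma not_summable_of_frequently_le {a : ℕ → ℝ} {ε : ℝ} (hε : 0 < ε)
    (h : ∃ᶠ n in atTop, ε ≤ a n) : ¬Summable a := fun ha => by
  obtain ⟨n, hle, hlt⟩ :=
    (h.and_eventually ((tendsto_order.1 ha.tendsto_atTop_zero).2 ε hε)).exists
  exact hle.not_gt hlt

lemma summable_of_sub_succ_eq {z t : ℕ → ℝ} (hz : ∀ n, 0 ≤ z n) (ht : ∀ n, 0 ≤ t n)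
    (h : ∀ n, z (n + 1) = z n - t n) : Summable t := by
  refine summable_of_sum_range_le (c := z 0) ht fun n => ?_
  have hsum : ∑ i ∈ Finset.range n, t i = z 0 - z n := by
    rw [← Finset.sum_range_sub']
    exact Finset.sum_congr rfl fun i _ => by rw [h i]; ring
  linarith [hz n]

theorem MeasureTheory.Conservative.ae_exists_pos_frequently_le {α : Type*} [MeasurableSpace α]
    {μ : Measure α} {f : α → α} (hf : Conservative f μ) {τ : α → ℝ} (hτ : AEMeasurable τ μ)
    (hpos : ∀ᵐ x ∂μ, 0 < τ x) : ∀ᵐ x ∂μ, ∃ ε > 0, ∃ᶠ n in atTop, ε ≤ τ (f^[n] x) := by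
  have hrec : ∀ᵐ x ∂μ, ∀ m : ℕ, 1 / ((m : ℝ) + 1) ≤ τ x →
      ∃ᶠ n in atTop, 1 / ((m : ℝ) + 1) ≤ τ (f^[n] x) :=
    ae_all_iff.2 fun m =>
      hf.ae_mem_imp_frequently_image_mem (nullMeasurableSet_le aemeasurable_const hτ)
  filter_upwards [hrec, hpos] with x hx hx0
  obtain ⟨m, hm⟩ := exists_nat_one_div_lt hx0
  exact ⟨_, Nat.one_div_pos_of_nat, hx m hm.le⟩

section Zfam

variable {Ω : Type*} {f g : Ω → Ω} (σ τ : Ω → ℝ)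

lemma Zterm_succ_apply (hgf : Function.LeftInverse g f) (k : ℕ) (ω : Ω) :
    Zterm g σ τ (k + 1) (f ω) = Zterm g σ τ k ω - τ ω := by
  have hit : ∀ i, g^[i + 1] (f ω) = g^[i] ω := fun i => by
    rw [Function.iterate_succ_apply, hgf ω]
  have hsum : ∀ k, ∑ i ∈ Finset.Icc 1 (k + 1), τ (g^[i] (f ω))
      = τ ω + ∑ i ∈ Finset.Icc 1 k, τ (g^[i] ω) := by
    intro k
    induction k with
    | zero => simp [hgf ω]
    | succ k ih =>
      rw [Finset.sum_Icc_succ_top (by omega), ih, Finset.sum_Icc_succ_top (by omega), hit]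
      ring
  rw [Zterm, Zterm, hsum, hit]
  ring

lemma Zfam_one_apply_of_lt (hgf : Function.LeftInverse g f) {ω : Ω} (hσ : 0 ≤ σ ω)
    (hlt : σ ω < Zfam g σ τ 1 ω) :
    Zfam g σ τ 1 (f ω) = pos (Zfam g σ τ 1 ω - τ ω) := by
  set S := ⨆ k : {k : ℕ // 1 ≤ k}, Zterm g σ τ k ω
  have hZ : Zfam g σ τ 1 ω = S := pos_eq_self_of_pos (hσ.trans_lt hlt)
  have hS : 0 < S := hZ ▸ hσ.trans_lt hlt
  have hbdd : BddAbove (Set.range fun k : {k : ℕ // 1 ≤ k} => Zterm g σ τ k ω) := by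
    by_contra hb
    -- an unbounded real supremum takes the junk value `0`
    rw [show S = _ from ciSup_of_not_bddAbove hb, Real.sSup_empty] at hS
    exact hS.false
  have hshift : (⨆ k : {k : ℕ // 1 ≤ k}, Zterm g σ τ k (f ω))
      = ⨆ k : ℕ, (Zterm g σ τ k ω - τ ω) := by
    have hsurj : Function.Surjective
        fun k : ℕ => (⟨k + 1, Nat.le_add_left 1 k⟩ : {k : ℕ // 1 ≤ k}) :=
      fun ⟨k, hk⟩ => ⟨k - 1, Subtype.ext (Nat.sub_add_cancel hk)⟩
    rw [← hsurj.iSup_comp]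
    simp only [Zterm_succ_apply σ τ hgf]
  have hsup : ⨆ k : ℕ, (Zterm g σ τ k ω - τ ω) = S - τ ω := by
    refine ciSup_eq_of_forall_le_of_forall_lt_exists_gt (fun k => ?_) (fun w hw => ?_)
    · rcases k with _ | k
      · simp only [Zterm, Function.iterate_zero_apply, Finset.Icc_eq_empty_of_lt zero_lt_one,
          Finset.sum_empty, sub_zero]
        linarith
      · exact sub_le_sub_right (le_ciSup hbdd ⟨k + 1, Nat.le_add_left 1 k⟩) _
    · obtain ⟨⟨k, _⟩, hk⟩ := exists_lt_of_lt_ciSup (lt_sub_iff_add_lt.1 hw)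
      exact ⟨k, lt_sub_iff_add_lt.2 hk⟩
  rw [hZ, ← hsup, ← hshift]
  rfl

end Zfam

theorem stmt17_general {Ω : Type*} [MeasurableSpace Ω] (μ : MeasureTheory.Measure Ω)
    [MeasureTheory.IsProbabilityMeasure μ]
    (θ : Ω ≃ᵐ Ω) (hergo : Ergodic (⇑θ) μ)
    (σ τ : Ω → ℝ) (hτint : MeasureTheory.Integrable τ μ)
    (hσ0 : ∀ᵐ ω ∂μ, 0 ≤ σ ω) (hτ0 : ∀ᵐ ω ∂μ, 0 < τ ω) :
    0 < μ {ω | Zfam (⇑θ.symm) σ τ 1 ω ≤ σ ω} := by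
  set Z := Zfam (⇑θ.symm) σ τ 1
  by_contra hnull
  have hlt : ∀ᵐ ω ∂μ, σ ω < Z ω := by
    simpa [ae_iff] using hnull
  have hθ : MeasurePreserving θ μ μ := hergo.toMeasurePreserving
  have horbit : ∀ᵐ ω ∂μ, ∀ n, 0 ≤ σ (θ^[n] ω) ∧ σ (θ^[n] ω) < Z (θ^[n] ω) ∧ 0 < τ (θ^[n] ω) :=
    ae_all_iff.2 fun n => (hθ.iterate n).quasiMeasurePreserving.ae <|
      hσ0.and (hlt.and hτ0)
  obtain ⟨ω, hω, ε, hε, hfreq⟩ := (horbit.and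
    (hθ.conservative.ae_exists_pos_frequently_le hτint.aemeasurable hτ0)).exists
  refine not_summable_of_frequently_le hε hfreq
    (summable_of_sub_succ_eq (z := fun n => Z (θ^[n] ω)) (fun n => le_max_right _ 0)
      (fun n => (hω n).2.2.le) fun n => ?_)
  obtain ⟨hσn, hltn, -⟩ := hω n
  obtain ⟨hσn', hltn', -⟩ := hω (n + 1)
  have hstep : Z (θ (θ^[n] ω)) = pos (Z (θ^[n] ω) - τ (θ^[n] ω)) :=
    Zfam_one_apply_of_lt σ τ (fun x => θ.symm_apply_apply x) hσn hltn
  rw [Function.iterate_succ_apply'] at hσn' hltn' ⊢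
  rw [hstep] at hltn' ⊢
  exact pos_eq_self_of_pos (hσn'.trans_lt hltn')

theorem stmt17 {Ω : Type*} [MeasurableSpace Ω] (μ : MeasureTheory.Measure Ω)
    [MeasureTheory.IsProbabilityMeasure μ]
    (θ : Ω ≃ᵐ Ω) (hergo : Ergodic (⇑θ) μ)
    (σ τ : Ω → ℝ) (hσint : MeasureTheory.Integrable σ μ) (hτint : MeasureTheory.Integrable τ μ)
    (hσ0 : ∀ᵐ ω ∂μ, 0 ≤ σ ω) (hτ0 : ∀ᵐ ω ∂μ, 0 < τ ω) :
    0 < μ {ω | Zfam (⇑θ.symm) σ τ 1 ω ≤ σ ω} :=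
  stmt17_general μ θ hergo σ τ hτint hσ0 hτ0
end
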